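/- Let n ≥ 1 and let P be the Z₂-crown of order n. Let Q be a finite dismantlable poset and let f : P → Q₁ be an order-preserving map which factors as f = h ∘ g with order-preserving maps g : P → Q and h : Q → Q₁. Then f̂(soi(P)) = 0 in ZMod2^{Q₁²}. -/

import Mathlib

/-! ### The poset `Q₁` (face poset of the 1-dimensional cross-polytope) -/

/-- The four elements `+0, -0, +1, -1` of `Q₁`. -/
inductive Q1 : Type
  | p0 | m0 | p1 | m1
deriving DecidableEq

instance instFintypeQ1 : Fintype Q1 :=
  ⟨{.p0, .m0, .p1, .m1}, by intro x; cases x <;> simp⟩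

/-- The level (`false` for `±0`, `true` for `±1`) of an element of `Q₁`. -/
def Q1.lvl : Q1 → Bool
  | .p0 => false | .m0 => false | .p1 => true | .m1 => true

/-- The order on `Q₁`: `±0 < ±1` (all four strict relations). -/
instance : PartialOrder Q1 where
  le x y := x = y ∨ (x.lvl = false ∧ y.lvl = true)
  le_refl x := Or.inl rfl
  le_trans x y z hxy hyz := by
    rcases hxy with rfl | ⟨h1, h2⟩
    · exact hyz
    rcases hyz with rfl | ⟨h3, h4⟩
    · exact Or.inr ⟨h1, h2⟩
    · rw [h2] at h3; exact absurd h3 (by simp)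
  le_antisymm x y hxy hyx := by
    rcases hxy with rfl | ⟨h1, h2⟩
    · rfl
    rcases hyx with rfl | ⟨h3, h4⟩
    · rfl
    · rw [h2] at h3; exact absurd h3 (by simp)

/-- The involution of `Q₁`, swapping `+x` and `-x`. -/
def q1inv : Q1 → Q1
  | .p0 => .m0 | .m0 => .p0 | .p1 => .m1 | .m1 => .p1

/-! ### The `Z₂`-crown of order `n` -/

/-- The `Z₂`-crown of order `n` has element set `ZMod (4n)`. -/
abbrev Crown (n : ℕ) : Type := ZMod (4 * n)

instance (n : ℕ) [NeZero n] : NeZero (4 * n) := ⟨by have := NeZero.ne n; omega⟩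

private lemma crown_parity {n : ℕ} [NeZero n] (x : ZMod (4 * n)) :
    (x + 1).val % 2 = (x.val + 1) % 2 := by
  haveI : Fact (1 < 4 * n) := ⟨by have := NeZero.ne n; omega⟩
  rw [ZMod.val_add, ZMod.val_one, Nat.mod_mod_of_dvd _ ⟨2 * n, by ring⟩]

/-- The order on the crown, generated by `e < e + 1` and `e < e - 1` for even `e`. -/
instance crownPO (n : ℕ) [NeZero n] : PartialOrder (Crown n) where
  le x y := x = y ∨ (Even x.val ∧ (y = x + 1 ∨ y = x - 1))
  le_refl x := Or.inl rfl
  le_trans x y z hxy hyz := by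
    rcases hxy with rfl | ⟨hex, hy⟩
    · exact hyz
    rcases hyz with rfl | ⟨hey, hz⟩
    · exact Or.inr ⟨hex, hy⟩
    · exfalso
      rcases hy with rfl | rfl
      · have h := crown_parity x
        rw [Nat.even_iff] at hex hey; omega
      · have e : x - 1 + 1 = x := by ring
        have h := crown_parity (x - 1)
        rw [e] at h
        rw [Nat.even_iff] at hex hey; omega
  le_antisymm x y hxy hyx := by
    rcases hxy with rfl | ⟨hex, hy⟩
    · rfl
    rcases hyx with rfl | ⟨hey, hx⟩
    · rfl
    · exfalso
      rcases hy with rfl | rfl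
      · have h := crown_parity x
        rw [Nat.even_iff] at hex hey; omega
      · have e : x - 1 + 1 = x := by ring
        have h := crown_parity (x - 1)
        rw [e] at h
        rw [Nat.even_iff] at hex hey; omega

/-! ### The vector space `ZMod2^{P²}` with its strict order indicator -/

/-- Ordered pairs `(x,y)` with `x ≤ y` of a poset: the basis of `ZMod2^{P²}`. -/
abbrev OPairs (P : Type) [PartialOrder P] : Type := {p : P × P // p.1 ≤ p.2}

/-- The `ZMod 2`-vector space with basis the ordered pairs of `P`. -/
abbrev VS (P : Type) [PartialOrder P] := OPairs P →₀ ZMod 2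

open scoped Classical in
/-- The strict order indicator: the sum of the basis elements `(x,y)` with `x < y`. -/
noncomputable def soi (P : Type) [PartialOrder P] [Finite P] : VS P :=
  letI : Fintype (OPairs P) := Fintype.ofFinite _
  ∑ p : OPairs P, if p.val.1 < p.val.2 then Finsupp.single p 1 else 0

open scoped Classical in
/-- The sum of the basis elements `(x,y)` with `x < y` and `x, y ∈ S`. -/
noncomputable def soiOn {P : Type} [PartialOrder P] [Finite P] (S : Set P) : VS P :=
  letI : Fintype (OPairs P) := Fintype.ofFinite _
  ∑ p : OPairs P,
    if p.val.1 ∈ S ∧ p.val.2 ∈ S ∧ p.val.1 < p.val.2 then Finsupp.single p 1 else 0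

/-- The linear map `f̂` induced by a monotone map, sending the basis element `(x,y)`
to `(f x, f y)`. -/
noncomputable def fhat {P Q : Type} [PartialOrder P] [PartialOrder Q] {f : P → Q}
    (hf : Monotone f) : VS P →ₗ[ZMod 2] VS Q :=
  Finsupp.lmapDomain (ZMod 2) (ZMod 2) (fun p => ⟨(f p.val.1, f p.val.2), hf p.prop⟩)

/-- `p` is dominated by `q` within the subposet `S`. -/
def DomIn {α : Type} [PartialOrder α] (S : Set α) (p q : α) : Prop :=
  p ∈ S ∧ q ∈ S ∧ p ≠ q ∧ (p ≤ q ∨ q ≤ p) ∧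
    ∀ x ∈ S, x ≠ p → x ≠ q → (x < p → x < q) ∧ (p < x → q < x)

/-- `Reduces S T`: the subposet `S` can be reduced to the subposet `T` by successively
deleting dominated elements. -/
inductive Reduces {α : Type} [PartialOrder α] : Set α → Set α → Prop
  | refl (S : Set α) : Reduces S S
  | step {S T : Set α} (p q : α) (h : DomIn S p q) (hr : Reduces (S \ {p}) T) : Reduces S T

/-- A poset is dismantlable if it reduces to a one-element subposet by successively
deleting dominated elements. -/
def Dismantlable (α : Type) [PartialOrder α] : Prop :=
  ∃ x : α, Reduces (Set.univ : Set α) {x}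

/-! Forgetting that the pairs are ordered, `f̂(soi P)` is the mod-2 sum of the pairs
`(f e, f (e ± 1))` over the edges of the crown, `e` even. Replacing `f` by a pointwise comparable
order-preserving map does not change this sum: the points can be moved one at a time so that
each moved point has both neighbours at the same value, and then its two edges cancel.
Retracting an element `p` onto an element `q` dominating it turns `g` into a comparable map, so
dismantlability of `Q` deforms `g` into a constant map, whose sum is zero. -/

theorem Finsupp.single_one_add_self {β : Type*} (a : β) :
    Finsupp.single a (1 : ZMod 2) + Finsupp.single a 1 = 0 := by
  rw [← Finsupp.single_add, show (1 + 1 : ZMod 2) = 0 from rfl, Finsupp.single_zero]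

theorem Q1.isMin_of_lt {a b : Q1} (h : a < b) : IsMin a := by
  obtain ⟨ha, -⟩ := h.le.resolve_left h.ne
  rintro c (rfl | ⟨-, hc⟩)
  · exact le_rfl
  · simp [ha] at hc

theorem Q1.isMax_of_lt {a b : Q1} (h : a < b) : IsMax b := by
  obtain ⟨-, hb⟩ := h.le.resolve_left h.ne
  rintro c (rfl | ⟨hc, -⟩)
  · exact le_rfl
  · simp [hb] at hc

namespace Crown

variable {n : ℕ} {α : Type*}

noncomputable def starSum (u : Crown n → α) (S : Finset (Crown n)) : α × α →₀ ZMod 2 :=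
  ∑ e ∈ S, (Finsupp.single (u e, u (e + 1)) 1 + Finsupp.single (u e, u (e - 1)) 1)

theorem starSum_const (c : α) (S : Finset (Crown n)) : starSum (fun _ => c) S = 0 :=
  Finset.sum_eq_zero fun _ _ => Finsupp.single_one_add_self _

variable [NeZero n]

theorem two_ne_zero : (2 : Crown n) ≠ 0 := by
  have h2 : (2 : ℕ) < 4 * n := by have := NeZero.ne n; omega
  intro h
  simpa [h] using ZMod.val_cast_of_lt h2

theorem add_one_ne_sub_one (x : Crown n) : x + 1 ≠ x - 1 := fun h =>
  two_ne_zero (by linear_combination h)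

theorem add_one_ne_self (x : Crown n) : x + 1 ≠ x := fun h =>
  two_ne_zero (by linear_combination 2 * h)

theorem sub_one_ne_self (x : Crown n) : x - 1 ≠ x := fun h =>
  add_one_ne_self (x - 1) (by rw [sub_add_cancel]; exact h.symm)

theorem even_add_one_iff (x : Crown n) : Even (x + 1).val ↔ ¬Even x.val := by
  have := crown_parity x
  rw [Nat.even_iff, Nat.even_iff]
  omega

theorem even_sub_one_iff (x : Crown n) : Even (x - 1).val ↔ ¬Even x.val := by
  rw [← not_iff_not, not_not, ← even_add_one_iff, sub_add_cancel]

theorem lt_iff (x y : Crown n) : x < y ↔ Even x.val ∧ (y = x + 1 ∨ y = x - 1) := by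
  refine ⟨fun h => h.le.resolve_left h.ne, fun h => lt_of_le_of_ne (Or.inr h) ?_⟩
  rintro rfl
  rcases h.2 with h | h
  · exact add_one_ne_self x h.symm
  · exact sub_one_ne_self x h.symm

theorem lt_add_one_of_even {x : Crown n} (hx : Even x.val) : x < x + 1 :=
  (lt_iff _ _).2 ⟨hx, Or.inl rfl⟩

theorem lt_sub_one_of_even {x : Crown n} (hx : Even x.val) : x < x - 1 :=
  (lt_iff _ _).2 ⟨hx, Or.inr rfl⟩

theorem sub_one_lt_of_odd {x : Crown n} (hx : ¬Even x.val) : x - 1 < x := by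
  simpa using lt_add_one_of_even ((even_sub_one_iff x).2 hx)

theorem add_one_lt_of_odd {x : Crown n} (hx : ¬Even x.val) : x + 1 < x := by
  simpa using lt_sub_one_of_even ((even_add_one_iff x).2 hx)

def evens (n : ℕ) [NeZero n] : Finset (Crown n) := {x | Even x.val}

def odds (n : ℕ) [NeZero n] : Finset (Crown n) := {x | ¬Even x.val}

theorem mem_evens {x : Crown n} : x ∈ evens n ↔ Even x.val := by simp [evens]

theorem mem_odds {x : Crown n} : x ∈ odds n ↔ ¬Even x.val := by
  simp [odds, -Nat.not_even_iff_odd]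

open scoped Classical in
theorem sum_lt_single_eq_starSum (u : Crown n → α) :
    ∑ p : Crown n × Crown n, (if p.1 < p.2 then Finsupp.single (u p.1, u p.2) 1 else 0) =
      starSum u (evens n) := by
  rw [Fintype.sum_prod_type, starSum, evens, Finset.sum_filter]
  refine Finset.sum_congr rfl fun e _ => ?_
  by_cases he : Even e.val
  · rw [if_pos he, Fintype.sum_eq_add (e + 1) (e - 1) (add_one_ne_sub_one e),
      if_pos (lt_add_one_of_even he), if_pos (lt_sub_one_of_even he)]
    rintro y ⟨hy₁, hy₂⟩
    exact if_neg fun hlt => by rw [lt_iff] at hlt; tauto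
  · rw [if_neg he]
    exact Finset.sum_eq_zero fun y _ => if_neg fun hlt => he ((lt_iff e y).1 hlt).1

-- Each edge `{e, e ± 1}` is the star of its even end and, reversed, of its odd end.
theorem mapDomain_swap_starSum_evens (u : Crown n → α) :
    Finsupp.mapDomain Prod.swap (starSum u (evens n)) = starSum u (odds n) := by
  classical
  simp only [starSum, Finsupp.mapDomain_finsetSum, Finsupp.mapDomain_add,
    Finsupp.mapDomain_single, Prod.swap_prod_mk, Finset.sum_add_distrib]
  rw [add_comm]
  congr 1
  · refine Finset.sum_nbij' (· - 1) (· + 1) ?_ ?_ ?_ ?_ ?_ <;>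
      simp [mem_evens, mem_odds, even_sub_one_iff, even_add_one_iff]
  · refine Finset.sum_nbij' (· + 1) (· - 1) ?_ ?_ ?_ ?_ ?_ <;>
      simp [mem_evens, mem_odds, even_sub_one_iff, even_add_one_iff]

theorem starSum_update [DecidableEq α] {u : Crown n → α} {S : Finset (Crown n)} {x : Crown n}
    (hx : x ∈ S) (hx₁ : x + 1 ∉ S) (hx₂ : x - 1 ∉ S) (hu : u (x + 1) = u (x - 1)) (c : α) :
    starSum (Function.update u x c) S = starSum u S := by
  refine Finset.sum_congr rfl fun e he => ?_
  by_cases hex : e = x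
  · subst hex
    simp only [Function.update_self, Function.update_of_ne (add_one_ne_self e),
      Function.update_of_ne (sub_one_ne_self e), hu, Finsupp.single_one_add_self]
  · have h₁ : e + 1 ≠ x := by rintro rfl; exact hx₂ (by simpa using he)
    have h₂ : e - 1 ≠ x := by rintro rfl; exact hx₁ (by simpa using he)
    simp only [Function.update_of_ne hex, Function.update_of_ne h₁, Function.update_of_ne h₂]

theorem starSum_evens_update [DecidableEq α] {u : Crown n → α} {x : Crown n}
    (hu : u (x + 1) = u (x - 1)) (c : α) :
    starSum (Function.update u x c) (evens n) = starSum u (evens n) := by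
  by_cases hx : Even x.val
  · exact starSum_update (mem_evens.2 hx) (by simpa [mem_evens, even_add_one_iff])
      (by simpa [mem_evens, even_sub_one_iff]) hu c
  · refine Finsupp.mapDomain_injective Prod.swap_injective ?_
    simp only [mapDomain_swap_starSum_evens]
    exact starSum_update (mem_odds.2 hx) (by simpa [mem_odds, even_add_one_iff] using hx)
      (by simpa [mem_odds, even_sub_one_iff] using hx) hu c

theorem starSum_evens_piecewise [DecidableEq α] (u v : Crown n → α) (S : Finset (Crown n))
    (hS : ∀ x ∈ S, x + 1 ∉ S ∧ x - 1 ∉ S) (huv : ∀ x ∈ S, u x ≠ v x → u (x + 1) = u (x - 1)) :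
    starSum (S.piecewise v u) (evens n) = starSum u (evens n) := by
  induction S using Finset.induction_on with
  | empty => simp
  | insert x S hxS ih =>
    have hS' : ∀ y ∈ S, y + 1 ∉ S ∧ y - 1 ∉ S := fun y hy =>
      (hS y (Finset.mem_insert_of_mem hy)).imp (mt Finset.mem_insert_of_mem)
        (mt Finset.mem_insert_of_mem)
    rw [Finset.piecewise_insert, ← ih hS' fun y hy => huv y (Finset.mem_insert_of_mem hy)]
    obtain ⟨hx₁, hx₂⟩ := hS x (Finset.mem_insert_self x S)
    by_cases hx : u x = v x
    · rw [← hx, ← Finset.piecewise_eq_of_notMem S v u hxS, Function.update_eq_self]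
    · refine starSum_evens_update ?_ _
      rw [Finset.piecewise_eq_of_notMem _ _ _ (mt Finset.mem_insert_of_mem hx₁),
        Finset.piecewise_eq_of_notMem _ _ _ (mt Finset.mem_insert_of_mem hx₂)]
      exact huv x (Finset.mem_insert_self x S) hx

-- A value of `Q₁` strictly below another is minimal and one strictly above is maximal, so a
-- moved odd point has both (lower) neighbours at its old value, and a moved even point has
-- both (upper) neighbours at its new value.
theorem starSum_evens_eq_of_le {u v : Crown n → Q1} (hu : Monotone u) (hv : Monotone v)
    (huv : u ≤ v) : starSum u (evens n) = starSum v (evens n) := by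
  classical
  set w := (odds n).piecewise v u
  have hw : starSum w (evens n) = starSum u (evens n) := by
    refine starSum_evens_piecewise u v _ (fun x hx => ?_) fun x hx hne => ?_
    · simp_all [mem_odds, even_add_one_iff, even_sub_one_iff]
    · have hmin := Q1.isMin_of_lt (lt_of_le_of_ne (huv x) hne)
      rw [mem_odds] at hx
      rw [hmin.eq_of_le (hu (add_one_lt_of_odd hx).le),
        hmin.eq_of_le (hu (sub_one_lt_of_odd hx).le)]
  have hvw : (evens n).piecewise v w = v := by
    ext x
    by_cases hx : x ∈ evens n
    · simp [hx]
    · simp [hx, w, mem_odds, ← mem_evens]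
  rw [← hw, ← hvw]
  refine (starSum_evens_piecewise w v _ (fun x hx => ?_) fun x hx hne => ?_).symm
  · simp_all [mem_evens, even_add_one_iff, even_sub_one_iff]
  · rw [mem_evens] at hx
    simp only [w, Finset.piecewise, mem_odds, even_add_one_iff, even_sub_one_iff, hx,
      not_true, not_false_eq_true, if_true, if_false] at hne ⊢
    have hmax := Q1.isMax_of_lt (lt_of_le_of_ne (huv x) hne)
    rw [hmax.eq_of_ge (hv (lt_add_one_of_even hx).le),
      hmax.eq_of_ge (hv (lt_sub_one_of_even hx).le)]

end Crown

section Dismantling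

variable {α : Type} [PartialOrder α] {S : Set α} {p q y : α}

theorem DomIn.le_of_lt (h : DomIn S p q) (hy : y ∈ S) (hpy : p < y) : q ≤ y := by
  obtain ⟨-, -, -, -, hdom⟩ := h
  rcases eq_or_ne y q with rfl | hyq
  · exact le_rfl
  · exact ((hdom y hy hpy.ne' hyq).2 hpy).le

theorem DomIn.ge_of_lt (h : DomIn S p q) (hy : y ∈ S) (hyp : y < p) : y ≤ q := by
  obtain ⟨-, -, -, -, hdom⟩ := h
  rcases eq_or_ne y q with rfl | hyq
  · exact le_rfl
  · exact ((hdom y hy hyp.ne hyq).1 hyp).le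

theorem DomIn.monotoneOn_update_id [DecidableEq α] (h : DomIn S p q) :
    MonotoneOn (Function.update id p q) S := by
  intro x hx y hy hxy
  simp only [Function.update_apply, id_eq]
  split_ifs with hxp hyp hyp
  · exact le_rfl
  · subst hxp; exact h.le_of_lt hy (lt_of_le_of_ne hxy (Ne.symm hyp))
  · subst hyp; exact h.ge_of_lt hx (lt_of_le_of_ne hxy hxp)
  · exact hxy

theorem DomIn.id_le_update_or_update_le_id [DecidableEq α] (h : DomIn S p q) :
    id ≤ Function.update id p q ∨ Function.update id p q ≤ id := by
  obtain ⟨-, -, -, hcomp, -⟩ := h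
  refine hcomp.imp (fun hle y => ?_) (fun hle y => ?_) <;>
    rcases eq_or_ne y p with rfl | hy <;> simp [*]

theorem Reduces.exists_monotone_eq {P β : Type*} [Preorder P] (I : (P → α) → β)
    (hI : ∀ g₁ g₂, Monotone g₁ → Monotone g₂ → g₁ ≤ g₂ → I g₁ = I g₂) {T : Set α}
    (hST : Reduces S T) {g : P → α} (hg : Monotone g) (hgS : ∀ x, g x ∈ S) :
    ∃ g', Monotone g' ∧ (∀ x, g' x ∈ T) ∧ I g' = I g := by
  classical
  induction hST generalizing g with
  | refl S => exact ⟨g, hg, hgS, rfl⟩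
  | @step S T p q hdom _ ih =>
    set r := Function.update id p q
    have hrg : Monotone (r ∘ g) := fun x y hxy =>
      hdom.monotoneOn_update_id (hgS x) (hgS y) (hg hxy)
    have hrgS : ∀ x, r (g x) ∈ S \ {p} := by
      obtain ⟨-, hq, hpq, -⟩ := hdom
      intro x
      rcases eq_or_ne (g x) p with hx | hx
      · simpa [r, hx] using ⟨hq, hpq.symm⟩
      · simpa [r, hx] using hgS x
    obtain ⟨g', hg', hg'T, hIg'⟩ := ih hrg hrgS
    refine ⟨g', hg', hg'T, hIg'.trans ?_⟩
    rcases hdom.id_le_update_or_update_le_id with hle | hle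
    · exact (hI _ _ hg hrg fun x => hle (g x)).symm
    · exact hI _ _ hrg hg fun x => hle (g x)

end Dismantling

open scoped Classical in
theorem mapDomain_val_fhat_soi {P Q : Type} [PartialOrder P] [Fintype P] [PartialOrder Q]
    {f : P → Q} (hf : Monotone f) :
    Finsupp.mapDomain Subtype.val (fhat hf (soi P)) =
      ∑ p : P × P, if p.1 < p.2 then Finsupp.single (f p.1, f p.2) 1 else 0 := by
  let _ : Fintype (OPairs P) := Fintype.ofFinite _
  have hle : ∀ p ∈ (Finset.univ : Finset (P × P)),
      (if p.1 < p.2 then Finsupp.single (f p.1, f p.2) (1 : ZMod 2) else 0) ≠ 0 → p.1 ≤ p.2 :=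
    fun p _ hp => by_contra fun hnot => hp (if_neg fun hlt => hnot hlt.le)
  rw [soi, map_sum, Finsupp.mapDomain_finsetSum, ← Finset.sum_filter_of_ne hle,
    Finset.sum_subtype _ (p := fun p : P × P => p.1 ≤ p.2) fun _ => by simp]
  refine Finset.sum_congr rfl fun p _ => ?_
  split_ifs <;> simp [fhat]

theorem crown_map_through_dismantlable_soi_zero_general (n : ℕ) [NeZero n]
    (Q : Type) [PartialOrder Q] (hQ : Dismantlable Q)
    (g : Crown n → Q) (h : Q → Q1) (hg : Monotone g) (hh : Monotone h) :
    fhat (hh.comp hg) (soi (Crown n)) = 0 := by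
  obtain ⟨x₀, hred⟩ := hQ
  obtain ⟨g', -, hg'x₀, hI⟩ :=
    hred.exists_monotone_eq (fun g => Crown.starSum (h ∘ g) (Crown.evens n))
      (fun _ _ hg₁ hg₂ hle =>
        Crown.starSum_evens_eq_of_le (hh.comp hg₁) (hh.comp hg₂) fun x => hh (hle x))
      hg fun _ => Set.mem_univ _
  have hconst : h ∘ g' = fun _ => h x₀ := funext fun x => congrArg h (hg'x₀ x)
  refine Finsupp.mapDomain_injective Subtype.val_injective ?_
  rw [mapDomain_val_fhat_soi, Crown.sum_lt_single_eq_starSum, ← hI, hconst, Crown.starSum_const,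
    Finsupp.mapDomain_zero]

/-- If `P` is the `Z₂`-crown of order `n ≥ 1`, `Q` is a finite
dismantlable poset and `f = h ∘ g : P → Q₁` is order-preserving, factoring through `Q`,
then `f̂(soi(P)) = 0`. -/
theorem crown_map_through_dismantlable_soi_zero (n : ℕ) [NeZero n]
    (Q : Type) [PartialOrder Q] [Finite Q] (hQ : Dismantlable Q)
    (g : Crown n → Q) (h : Q → Q1) (hg : Monotone g) (hh : Monotone h) :
    fhat (hh.comp hg) (soi (Crown n)) = 0 :=
  crown_map_through_dismantlable_soi_zero_general n Q hQ g h hg hh
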